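/- Let X be a Banach lattice admitting a positively homogeneous continuous function calculus, and let h ∈ ℋ_m for some m ∈ ℕ. Then the map from X^m to X defined by (x_1,…,x_m) ↦ h(x_1,…,x_m) is continuous with respect to the norm ‖(x_1,…,x_m)‖ = max_{1≤j≤m} ‖x_j‖ on X^m. -/

import Mathlib

/-!
By the lattice version of the Stone–Weierstrass theorem on the compact ℓ¹-sphere
`{t | ∑ |t j| = 1}`, followed by positive homogeneity, `h` is approximated by expressions `p`
built from the coordinates with `+`, scalar multiples and `⊔`, up to an error
`|h t - p t| ≤ ε ∑ |t j|`. Since `h ↦ h(x)` is a lattice homomorphism, this pointwise inequality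
becomes `|h(x) - p(x)| ≤ ε ∑ |x j|` in `X`, and the solid norm gives
`‖h(x) - p(x)‖ ≤ ε ∑ ‖x j‖`. The maps `x ↦ p(x)` are continuous because the lattice operations
are, so `x ↦ h(x)` is a locally uniform limit of continuous maps.
-/

/-- A function `h : ℝ^m → ℝ` belongs to `ℋ_m` iff it is continuous and positively
homogeneous. -/
def IsPHC {m : ℕ} (h : (Fin m → ℝ) → ℝ) : Prop :=
  Continuous h ∧ ∀ (c : ℝ), 0 ≤ c → ∀ t : Fin m → ℝ, h (c • t) = c * h t

open Finset Metric

variable {m : ℕ}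

namespace IsPHC

variable {f g : (Fin m → ℝ) → ℝ}

lemma proj (k : Fin m) : IsPHC fun t : Fin m → ℝ => t k :=
  ⟨continuous_apply k, fun c _ t => by simp⟩

lemma zero : IsPHC (0 : (Fin m → ℝ) → ℝ) :=
  ⟨continuous_const, fun c _ t => by simp⟩

lemma add (hf : IsPHC f) (hg : IsPHC g) : IsPHC (f + g) :=
  ⟨hf.1.add hg.1, fun c hc t => by simp only [Pi.add_apply, hf.2 c hc t, hg.2 c hc t, mul_add]⟩

lemma smul (a : ℝ) (hf : IsPHC f) : IsPHC (a • f) :=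
  ⟨hf.1.const_smul a, fun c hc t => by
    simp only [Pi.smul_apply, smul_eq_mul, hf.2 c hc t, mul_left_comm]⟩

lemma sup (hf : IsPHC f) (hg : IsPHC g) : IsPHC (f ⊔ g) :=
  ⟨hf.1.max hg.1, fun c hc t => by
    simp only [Pi.sup_apply, hf.2 c hc t, hg.2 c hc t, mul_max_of_nonneg _ _ hc]⟩

lemma neg (hf : IsPHC f) : IsPHC (-f) :=
  neg_one_smul ℝ f ▸ hf.smul (-1)

lemma sub (hf : IsPHC f) (hg : IsPHC g) : IsPHC (f - g) :=
  sub_eq_add_neg f g ▸ hf.add hg.neg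

lemma abs (hf : IsPHC f) : IsPHC |f| :=
  hf.sup hf.neg

lemma sum {ι : Type*} {s : Finset ι} {f : ι → (Fin m → ℝ) → ℝ} (hf : ∀ i ∈ s, IsPHC (f i)) :
    IsPHC (∑ i ∈ s, f i) :=
  sum_induction f IsPHC (fun _ _ => add) zero hf

lemma map_zero (hf : IsPHC f) : f 0 = 0 := by
  simpa using hf.2 0 le_rfl 0

end IsPHC

inductive InLatticeSpan : ((Fin m → ℝ) → ℝ) → Prop
  | proj (k : Fin m) : InLatticeSpan fun t => t k
  | zero : InLatticeSpan 0
  | add {p q} : InLatticeSpan p → InLatticeSpan q → InLatticeSpan (p + q)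
  | smul (c : ℝ) {p} : InLatticeSpan p → InLatticeSpan (c • p)
  | sup {p q} : InLatticeSpan p → InLatticeSpan q → InLatticeSpan (p ⊔ q)

namespace InLatticeSpan

variable {p q : (Fin m → ℝ) → ℝ}

lemma isPHC (hp : InLatticeSpan p) : IsPHC p := by
  induction hp with
  | proj k => exact IsPHC.proj k
  | zero => exact IsPHC.zero
  | add _ _ ihp ihq => exact ihp.add ihq
  | smul c _ ih => exact ih.smul c
  | sup _ _ ihp ihq => exact ihp.sup ihq

lemma neg (hp : InLatticeSpan p) : InLatticeSpan (-p) :=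
  neg_one_smul ℝ p ▸ hp.smul (-1)

lemma inf (hp : InLatticeSpan p) (hq : InLatticeSpan q) : InLatticeSpan (p ⊓ q) := by
  simpa only [neg_sup, neg_neg] using (hp.neg.sup hq.neg).neg

lemma sum {ι : Type*} {s : Finset ι} {f : ι → (Fin m → ℝ) → ℝ}
    (hf : ∀ i ∈ s, InLatticeSpan (f i)) : InLatticeSpan (∑ i ∈ s, f i) :=
  sum_induction f InLatticeSpan (fun _ _ => add) zero hf

end InLatticeSpan

def sumAbs (t : Fin m → ℝ) : ℝ := ∑ j, |t j|

lemma sumAbs_eq_sum : (sumAbs : (Fin m → ℝ) → ℝ) = ∑ j, |fun t : Fin m → ℝ => t j| := by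
  ext t
  simp [sumAbs, Finset.sum_apply]

lemma inLatticeSpan_sumAbs : InLatticeSpan (sumAbs : (Fin m → ℝ) → ℝ) :=
  sumAbs_eq_sum ▸ InLatticeSpan.sum fun j _ => (InLatticeSpan.proj j).sup (InLatticeSpan.proj j).neg

lemma abs_le_sumAbs (t : Fin m → ℝ) (j : Fin m) : |t j| ≤ sumAbs t :=
  single_le_sum (fun i _ => abs_nonneg (t i)) (mem_univ j)

lemma sumAbs_nonneg (t : Fin m → ℝ) : 0 ≤ sumAbs t :=
  sum_nonneg fun j _ => abs_nonneg (t j)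

lemma sumAbs_eq_zero_iff {t : Fin m → ℝ} : sumAbs t = 0 ↔ t = 0 := by
  simp [sumAbs, sum_eq_zero_iff_of_nonneg, funext_iff]

def l1Sphere (m : ℕ) : Set (Fin m → ℝ) := {t | sumAbs t = 1}

lemma isCompact_l1Sphere : IsCompact (l1Sphere m) := by
  refine isCompact_of_isClosed_isBounded
    (isClosed_eq inLatticeSpan_sumAbs.isPHC.1 continuous_const) ?_
  refine (isBounded_iff_subset_closedBall 0).2 ⟨1, fun t (ht : sumAbs t = 1) => ?_⟩
  rw [mem_closedBall_zero_iff, pi_norm_le_iff_of_nonneg zero_le_one]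
  exact fun j => ht ▸ abs_le_sumAbs t j

instance : CompactSpace (l1Sphere m) := isCompact_iff_compactSpace.1 isCompact_l1Sphere

def latticeSpanOnSphere (m : ℕ) : Set C(l1Sphere m, ℝ) :=
  {f | ∃ p, InLatticeSpan p ∧ ⇑f = p ∘ Subtype.val}

lemma InLatticeSpan.restrict_mem {p : (Fin m → ℝ) → ℝ} (hp : InLatticeSpan p) :
    ContinuousMap.restrict (l1Sphere m) ⟨p, hp.isPHC.1⟩ ∈ latticeSpanOnSphere m :=
  ⟨p, hp, rfl⟩

/-- Two distinct points of the sphere differ in some coordinate `j`, and since `sumAbs` is `1`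
on the sphere, an affine combination of `t j` and `sumAbs t` takes any two prescribed values. -/
lemma separatesPointsStrongly_latticeSpanOnSphere :
    (latticeSpanOnSphere m).SeparatesPointsStrongly := by
  intro v x y
  have hx : sumAbs (x : Fin m → ℝ) = 1 := x.2
  have hy : sumAbs (y : Fin m → ℝ) = 1 := y.2
  obtain rfl | hxy := eq_or_ne x y
  · exact ⟨_, (inLatticeSpan_sumAbs.smul (v x)).restrict_mem, by simp [hx], by simp [hx]⟩
  obtain ⟨j, hj⟩ : ∃ j, (x : Fin m → ℝ) j ≠ (y : Fin m → ℝ) j := by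
    simpa [funext_iff] using Subtype.coe_ne_coe.2 hxy
  set a := (v x - v y) / ((x : Fin m → ℝ) j - (y : Fin m → ℝ) j)
  refine ⟨_, (((InLatticeSpan.proj j).smul a).add
    (inLatticeSpan_sumAbs.smul (v x - a * (x : Fin m → ℝ) j))).restrict_mem, ?_, ?_⟩
  · simp [hx]
  · simp only [ContinuousMap.restrict_apply, ContinuousMap.coe_mk, Pi.add_apply, Pi.smul_apply,
      smul_eq_mul, hy, a]
    field_simp [sub_ne_zero.2 hj]
    ring

lemma closure_latticeSpanOnSphere : closure (latticeSpanOnSphere m) = ⊤ := by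
  refine ContinuousMap.sublattice_closure_eq_top _ ⟨_, InLatticeSpan.zero.restrict_mem⟩ ?_ ?_
    separatesPointsStrongly_latticeSpanOnSphere
  · rintro f ⟨p, hp, hf⟩ g ⟨q, hq, hg⟩
    exact ⟨p ⊓ q, hp.inf hq, by rw [ContinuousMap.coe_inf, hf, hg]; rfl⟩
  · rintro f ⟨p, hp, hf⟩ g ⟨q, hq, hg⟩
    exact ⟨p ⊔ q, hp.sup hq, by rw [ContinuousMap.coe_sup, hf, hg]; rfl⟩

lemma exists_inLatticeSpan_abs_sub_le_on_l1Sphere {h : (Fin m → ℝ) → ℝ} (hh : Continuous h)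
    {ε : ℝ} (hε : 0 < ε) : ∃ p, InLatticeSpan p ∧ ∀ t ∈ l1Sphere m, |h t - p t| ≤ ε := by
  have hmem : ContinuousMap.restrict (l1Sphere m) ⟨h, hh⟩ ∈ closure (latticeSpanOnSphere m) := by
    rw [closure_latticeSpanOnSphere]; trivial
  obtain ⟨g, ⟨p, hp, hg⟩, hdist⟩ := Metric.mem_closure_iff.1 hmem ε hε
  refine ⟨p, hp, fun t ht => ?_⟩
  simpa [hg, Real.dist_eq] using (ContinuousMap.dist_apply_le_dist ⟨t, ht⟩).trans hdist.le

lemma IsPHC.abs_le_mul_sumAbs {f : (Fin m → ℝ) → ℝ} (hf : IsPHC f) {ε : ℝ}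
    (hε : ∀ t ∈ l1Sphere m, |f t| ≤ ε) (t : Fin m → ℝ) : |f t| ≤ ε * sumAbs t := by
  obtain h0 | hpos := (sumAbs_nonneg t).eq_or_lt
  · rw [sumAbs_eq_zero_iff.1 h0.symm, hf.map_zero]
    simp [sumAbs]
  set c := sumAbs t
  have hunit : c⁻¹ • t ∈ l1Sphere m := by
    change sumAbs (c⁻¹ • t) = 1
    rw [inLatticeSpan_sumAbs.isPHC.2 _ (inv_nonneg.2 hpos.le), inv_mul_cancel₀ hpos.ne']
  calc |f t| = |f (c • c⁻¹ • t)| := by rw [smul_inv_smul₀ hpos.ne']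
    _ = c * |f (c⁻¹ • t)| := by rw [hf.2 c hpos.le, abs_mul, abs_of_pos hpos]
    _ ≤ c * ε := mul_le_mul_of_nonneg_left (hε _ hunit) hpos.le
    _ = ε * c := mul_comm _ _

lemma exists_inLatticeSpan_abs_sub_le_mul_sumAbs {h : (Fin m → ℝ) → ℝ} (hh : IsPHC h) {ε : ℝ}
    (hε : 0 < ε) : ∃ p, InLatticeSpan p ∧ ∀ t, |h t - p t| ≤ ε * sumAbs t := by
  obtain ⟨p, hp, hhp⟩ := exists_inLatticeSpan_abs_sub_le_on_l1Sphere hh.1 hε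
  exact ⟨p, hp, (hh.sub hp.isPHC).abs_le_mul_sumAbs hhp⟩

/-- `F x` plays the role of `Φ_x`; it is defined on all functions `ℝ^m → ℝ`, but constrained
only on `ℋ_m`. -/
structure IsFunctionCalculus {X : Type*} [AddCommGroup X] [Lattice X] [Module ℝ X]
    (F : (Fin m → X) → ((Fin m → ℝ) → ℝ) → X) : Prop where
  map_add : ∀ x h g, IsPHC h → IsPHC g → F x (h + g) = F x h + F x g
  map_smul : ∀ x (c : ℝ) h, IsPHC h → F x (c • h) = c • F x h
  map_sup : ∀ x h g, IsPHC h → IsPHC g → F x (h ⊔ g) = F x h ⊔ F x g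
  map_proj : ∀ x k, F x (fun t => t k) = x k

namespace IsFunctionCalculus

section Algebraic

variable {X : Type*} [AddCommGroup X] [Lattice X] [Module ℝ X]
  {F : (Fin m → X) → ((Fin m → ℝ) → ℝ) → X} (hF : IsFunctionCalculus F) (x : Fin m → X)
  {h g : (Fin m → ℝ) → ℝ}
include hF

lemma map_zero : F x 0 = 0 := by
  simpa using hF.map_smul x 0 0 IsPHC.zero

lemma map_neg (hh : IsPHC h) : F x (-h) = -F x h := by
  simpa using hF.map_smul x (-1) h hh

lemma map_sub (hh : IsPHC h) (hg : IsPHC g) : F x (h - g) = F x h - F x g := by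
  rw [sub_eq_add_neg, hF.map_add x _ _ hh hg.neg, hF.map_neg x hg, ← sub_eq_add_neg]

lemma map_abs (hh : IsPHC h) : F x |h| = |F x h| := by
  rw [abs, hF.map_sup x h (-h) hh hh.neg, hF.map_neg x hh]
  rfl

lemma map_sum {ι : Type*} (s : Finset ι) {f : ι → (Fin m → ℝ) → ℝ}
    (hf : ∀ i ∈ s, IsPHC (f i)) : F x (∑ i ∈ s, f i) = ∑ i ∈ s, F x (f i) := by
  classical
  induction s using Finset.induction_on with
  | empty => simpa using hF.map_zero x
  | insert i s hi ih =>
    have hs : ∀ j ∈ s, IsPHC (f j) := fun j hj => hf j (mem_insert_of_mem hj)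
    rw [sum_insert hi, sum_insert hi, hF.map_add x _ _ (hf i (mem_insert_self i s)) (IsPHC.sum hs),
      ih hs]

lemma map_sumAbs : F x sumAbs = ∑ j, |x j| := by
  rw [sumAbs_eq_sum, hF.map_sum x univ fun j _ => (IsPHC.proj j).abs]
  simp only [hF.map_abs x (IsPHC.proj _), hF.map_proj]

lemma mono (hh : IsPHC h) (hg : IsPHC g) (hhg : h ≤ g) : F x h ≤ F x g :=
  calc F x h ≤ F x h ⊔ F x g := le_sup_left
    _ = F x g := by rw [← hF.map_sup x h g hh hg, sup_eq_right.2 hhg]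

end Algebraic

section Normed

variable {X : Type*} [NormedAddCommGroup X] [Lattice X] [HasSolidNorm X] [NormedSpace ℝ X]
  {F : (Fin m → X) → ((Fin m → ℝ) → ℝ) → X} (hF : IsFunctionCalculus F)
  {h g : (Fin m → ℝ) → ℝ}
include hF

lemma norm_le_of_abs_le (x : Fin m → X) (hh : IsPHC h) (hg : IsPHC g) (hhg : |h| ≤ g) :
    ‖F x h‖ ≤ ‖F x g‖ := by
  have habs : |F x h| ≤ F x g := hF.map_abs x hh ▸ hF.mono x hh.abs hg hhg
  exact HasSolidNorm.solid (habs.trans (le_abs_self _))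

variable [IsOrderedAddMonoid X]

lemma norm_sub_le_mul (x : Fin m → X) (hh : IsPHC h) (hg : IsPHC g) {ε : ℝ} (hε : 0 ≤ ε)
    (hhg : ∀ t, |h t - g t| ≤ ε * sumAbs t) : ‖F x h - F x g‖ ≤ ε * (m * ‖x‖) := by
  have hσ : IsPHC (sumAbs : (Fin m → ℝ) → ℝ) := inLatticeSpan_sumAbs.isPHC
  calc ‖F x h - F x g‖ = ‖F x (h - g)‖ := by rw [hF.map_sub x hh hg]
    _ ≤ ‖F x (ε • sumAbs)‖ := hF.norm_le_of_abs_le x (hh.sub hg) (hσ.smul ε) hhg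
    _ = ε * ‖∑ j, |x j|‖ := by
      rw [hF.map_smul x ε _ hσ, hF.map_sumAbs, norm_smul, Real.norm_of_nonneg hε]
    _ ≤ ε * ∑ j, ‖x j‖ := by
      gcongr
      exact (norm_sum_le _ _).trans_eq (by simp_rw [norm_abs_eq_norm])
    _ ≤ ε * (m * ‖x‖) := by
      gcongr
      simpa using sum_le_card_nsmul univ _ _ fun j _ => norm_le_pi_norm x j

lemma continuous_of_inLatticeSpan {p : (Fin m → ℝ) → ℝ} (hp : InLatticeSpan p) :
    Continuous fun x => F x p := by
  induction hp with
  | proj k => exact (continuous_apply k).congr fun x => (hF.map_proj x k).symm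
  | zero => exact continuous_const.congr fun x => (hF.map_zero x).symm
  | add hp hq ihp ihq =>
    exact (ihp.add ihq).congr fun x => (hF.map_add x _ _ hp.isPHC hq.isPHC).symm
  | smul c hp ih => exact (ih.const_smul c).congr fun x => (hF.map_smul x c _ hp.isPHC).symm
  | sup hp hq ihp ihq =>
    exact (ihp.sup ihq).congr fun x => (hF.map_sup x _ _ hp.isPHC hq.isPHC).symm

end Normed

end IsFunctionCalculus

theorem function_calculus_continuous_general
    {X : Type*}
    [NormedAddCommGroup X] [Lattice X] [HasSolidNorm X] [IsOrderedAddMonoid X]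
    [NormedSpace ℝ X]
    -- the positively homogeneous continuous function calculus on `X`
    (Φ : ∀ m : ℕ, (Fin m → X) → ((Fin m → ℝ) → ℝ) → X)
    (hΦadd : ∀ (m) (x : Fin m → X) (h g), IsPHC h → IsPHC g →
      Φ m x (h + g) = Φ m x h + Φ m x g)
    (hΦsmul : ∀ (m) (x : Fin m → X) (c : ℝ) (h), IsPHC h → Φ m x (c • h) = c • Φ m x h)
    (hΦsup : ∀ (m) (x : Fin m → X) (h g), IsPHC h → IsPHC g →
      Φ m x (h ⊔ g) = Φ m x h ⊔ Φ m x g)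
    (hΦproj : ∀ (m) (x : Fin m → X) (k : Fin m), Φ m x (fun t => t k) = x k)
    {m : ℕ} (h : (Fin m → ℝ) → ℝ) (hh : IsPHC h) :
    Continuous (fun x : Fin m → X => Φ m x h) := by
  have hΦ : IsFunctionCalculus (Φ m) := ⟨hΦadd m, hΦsmul m, hΦsup m, hΦproj m⟩
  refine continuous_of_locally_uniform_approx_of_continuousAt fun x₀ u hu => ?_
  obtain ⟨ε, hε, hεu⟩ := mem_uniformity_dist.1 hu
  set R : ℝ := m * (‖x₀‖ + 1) + 1
  obtain ⟨p, hp, hhp⟩ := exists_inLatticeSpan_abs_sub_le_mul_sumAbs hh (by positivity : 0 < ε / R)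
  refine ⟨ball x₀ 1, ball_mem_nhds x₀ one_pos, fun x => Φ m x p,
    (hΦ.continuous_of_inLatticeSpan hp).continuousAt, fun y hy => hεu ?_⟩
  have hy : ‖y‖ ≤ ‖x₀‖ + 1 := norm_le_norm_add_const_of_dist_le (mem_ball.1 hy).le
  calc dist (Φ m y h) (Φ m y p) ≤ ε / R * (m * ‖y‖) := by
        rw [dist_eq_norm]
        exact hΦ.norm_sub_le_mul y hh hp.isPHC (by positivity) hhp
    _ ≤ ε / R * (R - 1) := by gcongr; simp only [R, add_sub_cancel_right]; gcongr
    _ < ε / R * R := by gcongr; linarith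
    _ = ε := div_mul_cancel₀ ε (by positivity)

/-- Let `X` be a Banach lattice admitting a positively homogeneous
continuous function calculus `Φ`, and let `h ∈ ℋ_m`. Then the map
`(x_1,…,x_m) ↦ h(x_1,…,x_m)` from `X^m` to `X` is continuous with respect to the norm
`‖(x_1,…,x_m)‖ = max_j ‖x_j‖` on `X^m` (which induces the product topology). -/
theorem function_calculus_continuous
    {X : Type*}
    [NormedAddCommGroup X] [Lattice X] [HasSolidNorm X] [IsOrderedAddMonoid X]
    [NormedSpace ℝ X] [CompleteSpace X]
    -- the positively homogeneous continuous function calculus on `X`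
    (Φ : ∀ m : ℕ, (Fin m → X) → ((Fin m → ℝ) → ℝ) → X)
    (hΦadd : ∀ (m) (x : Fin m → X) (h g), IsPHC h → IsPHC g →
      Φ m x (h + g) = Φ m x h + Φ m x g)
    (hΦsmul : ∀ (m) (x : Fin m → X) (c : ℝ) (h), IsPHC h → Φ m x (c • h) = c • Φ m x h)
    (hΦsup : ∀ (m) (x : Fin m → X) (h g), IsPHC h → IsPHC g →
      Φ m x (h ⊔ g) = Φ m x h ⊔ Φ m x g)
    (hΦproj : ∀ (m) (x : Fin m → X) (k : Fin m), Φ m x (fun t => t k) = x k)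
    {m : ℕ} (h : (Fin m → ℝ) → ℝ) (hh : IsPHC h) :
    Continuous (fun x : Fin m → X => Φ m x h) :=
  function_calculus_continuous_general Φ hΦadd hΦsmul hΦsup hΦproj h hh
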